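/- (Covering theorem.) Let f : X ⇀ X be a partial map on a metric space (X,d), F the restricted time extension on D_F with cost c_d, and G, B ⊆ {b} × X disjoint with G ⊔ B = {b} × X. If there exists (b−n, x) ∈ dom(F) with Fⁿ(b−n,x) ∈ G for some positive integer n, then D_F ∖ B = ⋃_{ε ∈ ℝ} G_{F,ε_Σ} = ⋃_{ε ∈ ℝ} G_{F,ε}; that is, every point of D_F not in B eventually lies in the ε-attracting basin of G for sufficiently large finite ε. -/

import Mathlib

open scoped ENNReal

variable {Y : Type*}

/-- The domain of a partial map represented as `Y → Option Y`. -/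
def pdom {Y : Type*} (F : Y → Option Y) : Set Y := {y | F y ≠ none}

/-- `IsCtrlPath F c ε y A n` : `y` admits an `ε`-controlled path of length `n` into `A`. -/
def IsCtrlPath {Y : Type*} (F : Y → Option Y) (c : Y → Y → ℝ≥0∞) (ε : ℝ≥0∞)
    (y : Y) (A : Set Y) : ℕ → Prop
  | 0 => y ∈ A
  | (n + 1) => ∃ ys zs : ℕ → Y,
      (∀ i ≤ n, F (ys i) = some (zs i)) ∧
      c y (ys 0) ≤ ε ∧
      (∀ i < n, c (zs i) (ys (i + 1)) ≤ ε) ∧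
      zs n ∈ A

/-- `ε_Σ`-controlled path: total perturbation cost at most `ε`. -/
def IsSumCtrlPath {Y : Type*} (F : Y → Option Y) (c : Y → Y → ℝ≥0∞) (ε : ℝ≥0∞)
    (y : Y) (A : Set Y) : ℕ → Prop
  | 0 => y ∈ A
  | (n + 1) => ∃ ys zs : ℕ → Y,
      (∀ i ≤ n, F (ys i) = some (zs i)) ∧
      (c y (ys 0) + ∑ i ∈ Finset.range n, c (zs i) (ys (i + 1))) ≤ ε ∧
      zs n ∈ A

/-- The `ε`-attracting basin. -/
def basin {Y : Type*} (F : Y → Option Y) (c : Y → Y → ℝ≥0∞) (ε : ℝ≥0∞) (A : Set Y) : Set Y :=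
  {y | ∃ n, IsCtrlPath F c ε y A n}

/-- The `ε_Σ`-attracting basin. -/
def sumBasin {Y : Type*} (F : Y → Option Y) (c : Y → Y → ℝ≥0∞) (ε : ℝ≥0∞) (A : Set Y) : Set Y :=
  {y | ∃ n, IsSumCtrlPath F c ε y A n}

/-- The `-0`-attracting basin. -/
def negZeroBasin {Y : Type*} (F : Y → Option Y) (c : Y → Y → ℝ≥0∞) (A : Set Y) : Set Y :=
  basin F c 0 (A \ pdom F)

/-- The `-ε`-attracting basin. -/
def negBasin {Y : Type*} (F : Y → Option Y) (c : Y → Y → ℝ≥0∞) (ε : ℝ≥0∞) (A : Set Y) : Set Y :=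
  {y | y ∈ negZeroBasin F c A ∧
    ∀ y', y' ∉ pdom F → y ∈ basin F c ε ({y'} : Set Y) → y' ∈ A}

/-- The `-ε_Σ`-attracting basin. -/
def negSumBasin {Y : Type*} (F : Y → Option Y) (c : Y → Y → ℝ≥0∞) (ε : ℝ≥0∞) (A : Set Y) : Set Y :=
  {y | y ∈ sumBasin F c 0 (A \ pdom F) ∧
    ∀ y', y' ∉ pdom F → y ∈ sumBasin F c ε ({y'} : Set Y) → y' ∈ A}



/-- Iteration of a partial map `f : X → Option X`. -/
def iterOpt {X : Type*} (f : X → Option X) : ℕ → X → Option X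
  | 0, x => some x
  | (n + 1), x => (iterOpt f n x).bind f

/-- The subset `D_F` of the time extension. -/
def DF {X : Type*} (f : X → Option X) (a b : ℤ) : Set (ℤ × X) :=
  {p | ∃ n : ℕ, (n : ℤ) ≤ b - a ∧ p.1 = b - (n : ℤ) ∧ (iterOpt f n p.2).isSome}

open Classical in
/-- The restriction `F` of the time extension `f̃(t,x) = (t+1, f(x))` to `D_F`. -/
noncomputable def FF {X : Type*} (f : X → Option X) (a b : ℤ) :
    ↥(DF f a b) → Option ↥(DF f a b) :=
  fun p =>
    if h : ∃ q : ↥(DF f a b),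
        (q : ℤ × X).1 = (p : ℤ × X).1 + 1 ∧ f (p : ℤ × X).2 = some (q : ℤ × X).2 then
      some h.choose
    else none

/-- The cost function on `D_F` associated to the metric `d`. -/
noncomputable def cd {X : Type*} [MetricSpace X] (f : X → Option X) (a b : ℤ) :
    ↥(DF f a b) → ↥(DF f a b) → ℝ≥0∞ :=
  fun p q =>
    if (p : ℤ × X).1 = (q : ℤ × X).1 then edist (p : ℤ × X).2 (q : ℤ × X).2 else ⊤

/-!
A point of `D_F` at a time `b - k < b` follows its own `F`-orbit for `k - 1` steps to time
`b - 1`; one jump of finite cost `d(f^{k-1}(x), f^{n-1}(x₀))` lands on the penultimate point of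
the reference orbit hitting `G`, whose image lies in `G`. Conversely, a finite-cost controlled
path starts inside `G` or perturbs its starting point within its own time slice to a point of
`dom F`, i.e. to a time `< b`, so it never starts in `B`. As `ε_Σ`-controlled paths are
`ε`-controlled, both unions are squeezed between these two inclusions.
-/

section ControlledPaths

variable {F : Y → Option Y} {c : Y → Y → ℝ≥0∞} {ε : ℝ≥0∞} {A : Set Y}

theorem iterOpt_succ' (F : Y → Option Y) (n : ℕ) (y : Y) :
    iterOpt F (n + 1) y = (F y).bind (iterOpt F n) := by
  induction n generalizing y with
  | zero => simp [iterOpt]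
  | succ n ih => rw [iterOpt, ih, Option.bind_assoc]; rfl

theorem exists_apply_eq_of_iterOpt_eq_some {n : ℕ} {y z : Y} (hn : 0 < n)
    (h : iterOpt F n y = some z) : ∃ w, F w = some z := by
  obtain ⟨m, rfl⟩ := Nat.exists_eq_add_of_lt hn
  obtain ⟨w, -, hw⟩ := Option.bind_eq_some_iff.mp h
  exact ⟨w, hw⟩

theorem IsSumCtrlPath.isCtrlPath {y : Y} :
    ∀ {n : ℕ}, IsSumCtrlPath F c ε y A n → IsCtrlPath F c ε y A n
  | 0, h => h
  | _ + 1, ⟨ys, zs, hF, hcost, hA⟩ =>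
    ⟨ys, zs, hF, le_self_add.trans hcost,
      fun _ hi => (Finset.single_le_sum (fun _ _ => zero_le)
        (Finset.mem_range.mpr hi)).trans (le_add_self.trans hcost), hA⟩

theorem sumBasin_subset_basin : sumBasin F c ε A ⊆ basin F c ε A :=
  fun _ ⟨n, h⟩ => ⟨n, h.isCtrlPath⟩

theorem mem_or_exists_of_mem_basin {y : Y} (hy : y ∈ basin F c ε A) :
    y ∈ A ∨ ∃ y' ∈ pdom F, c y y' ≤ ε := by
  obtain ⟨_ | n, h⟩ := hy
  · exact Or.inl h
  · obtain ⟨ys, zs, hF, hcost, -⟩ := h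
    exact Or.inr ⟨ys 0, by simp [pdom, hF 0 n.zero_le], hcost⟩

theorem isSumCtrlPath_one {z z' w : Y} (hw : F z' = some w) (hA : w ∈ A) (hε : c z z' ≤ ε) :
    IsSumCtrlPath F c ε z A 1 :=
  ⟨fun _ => z', fun _ => w, fun _ _ => hw, by simpa using hε, hA⟩

theorem IsSumCtrlPath.cons {n : ℕ} {y z : Y} (hc : c y y = 0) (hy : F y = some z)
    (h : IsSumCtrlPath F c ε z A (n + 1)) : IsSumCtrlPath F c ε y A (n + 2) := by
  obtain ⟨ys, zs, hF, hcost, hA⟩ := h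
  refine ⟨fun | 0 => y | i + 1 => ys i, fun | 0 => z | i + 1 => zs i, ?_, ?_, hA⟩
  · rintro (_ | _) hi
    exacts [hy, hF _ (by omega)]
  · rwa [Finset.sum_range_succ', hc, zero_add, add_comm]

theorem IsSumCtrlPath.of_iterOpt (hc : ∀ u, c u u = 0) {n : ℕ} {z : Y}
    (h : IsSumCtrlPath F c ε z A (n + 1)) :
    ∀ {k : ℕ} {y : Y}, iterOpt F k y = some z → IsSumCtrlPath F c ε y A (n + k + 1)
  | 0, _, hy => Option.some.inj hy ▸ h
  | k + 1, y, hy => by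
    rw [iterOpt_succ'] at hy
    obtain ⟨y₁, hy₁, hk⟩ := Option.bind_eq_some_iff.mp hy
    exact (h.of_iterOpt hc hk).cons (hc y) hy₁

end ControlledPaths

section TimeExtension

variable {X : Type*} {f : X → Option X} {a b : ℤ}

theorem fst_le_of_mem_DF {p : ℤ × X} (h : p ∈ DF f a b) : p.1 ≤ b := by
  obtain ⟨n, -, h, -⟩ := h
  omega

theorem fst_eq_of_FF_eq_some {p q : ↥(DF f a b)} (h : FF f a b p = some q) :
    (q : ℤ × X).1 = (p : ℤ × X).1 + 1 := by
  unfold FF at h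
  split at h
  · rename_i hex
    exact Option.some.inj h ▸ hex.choose_spec.1
  · exact absurd h nofun

theorem mem_pdom_FF_iff {p : ↥(DF f a b)} : p ∈ pdom (FF f a b) ↔ (p : ℤ × X).1 < b := by
  constructor
  · intro hp
    obtain ⟨q, hq⟩ := Option.ne_none_iff_exists'.mp hp
    have := fst_le_of_mem_DF q.2
    have := fst_eq_of_FF_eq_some hq
    omega
  · intro hp
    obtain ⟨_ | m, hm, hp1, hp2⟩ := p.2
    · omega
    obtain ⟨w, hw⟩ := Option.isSome_iff_exists.mp hp2
    rw [iterOpt_succ'] at hw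
    obtain ⟨x₁, hx₁, hw⟩ := Option.bind_eq_some_iff.mp hw
    have hmem : ((p : ℤ × X).1 + 1, x₁) ∈ DF f a b := ⟨m, by omega, by simp; omega, by simp [hw]⟩
    have hex : ∃ q : ↥(DF f a b),
        (q : ℤ × X).1 = (p : ℤ × X).1 + 1 ∧ f (p : ℤ × X).2 = some (q : ℤ × X).2 :=
      ⟨⟨_, hmem⟩, rfl, hx₁⟩
    show FF f a b p ≠ none
    unfold FF
    rw [dif_pos hex]
    exact Option.some_ne_none _

theorem exists_iterOpt_FF_eq_some (p : ↥(DF f a b)) :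
    ∀ k : ℕ, (p : ℤ × X).1 + k ≤ b →
      ∃ q, iterOpt (FF f a b) k p = some q ∧ (q : ℤ × X).1 = (p : ℤ × X).1 + k
  | 0, _ => ⟨p, rfl, by simp⟩
  | k + 1, hk => by
    obtain ⟨q, hq, hq1⟩ := exists_iterOpt_FF_eq_some p k (by omega)
    obtain ⟨q', hq'⟩ := Option.ne_none_iff_exists'.mp (mem_pdom_FF_iff (p := q) |>.mpr (by omega))
    refine ⟨q', by rw [iterOpt, hq, Option.bind_some, hq'], ?_⟩
    rw [fst_eq_of_FF_eq_some hq', hq1]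
    push_cast
    ring

variable [MetricSpace X]

theorem cd_self (p : ↥(DF f a b)) : cd f a b p p = 0 := by
  simp [cd]

theorem cd_ne_top_iff {p q : ↥(DF f a b)} :
    cd f a b p q ≠ ⊤ ↔ (p : ℤ × X).1 = (q : ℤ × X).1 := by
  unfold cd
  split_ifs with h <;> simp [h]

variable {G B : Set ↥(DF f a b)}

theorem disjoint_basin_FF (hGB : Disjoint G B) (hB : ∀ p ∈ B, (p : ℤ × X).1 = b) {ε : ℝ≥0∞}
    (hε : ε ≠ ⊤) : Disjoint (basin (FF f a b) (cd f a b) ε G) B := by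
  refine Set.disjoint_left.mpr fun y hy hyB => ?_
  rcases mem_or_exists_of_mem_basin hy with hyG | ⟨y', hy', hcost⟩
  · exact Set.disjoint_left.mp hGB hyG hyB
  · have h₁ := cd_ne_top_iff.mp (ne_top_of_le_ne_top hε hcost)
    have h₂ := mem_pdom_FF_iff.mp hy'
    have := hB y hyB
    omega

theorem exists_mem_sumBasin_FF (hcov : G ∪ B = {p : ↥(DF f a b) | (p : ℤ × X).1 = b})
    {r q : ↥(DF f a b)} (hr : FF f a b r = some q) (hq : q ∈ G) {y : ↥(DF f a b)}
    (hy : y ∉ B) : ∃ ε ≠ ⊤, y ∈ sumBasin (FF f a b) (cd f a b) ε G := by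
  have hq₁ : (q : ℤ × X).1 = b := (hcov.subset (Or.inl hq) : _)
  rcases (fst_le_of_mem_DF y.2).lt_or_eq with hy₁ | hy₁
  · obtain ⟨z, hz, hz₁⟩ := exists_iterOpt_FF_eq_some y (b - 1 - (y : ℤ × X).1).toNat (by omega)
    have hzr : (z : ℤ × X).1 = (r : ℤ × X).1 := by
      have := fst_eq_of_FF_eq_some hr
      omega
    exact ⟨_, cd_ne_top_iff.mpr hzr, _,
      (isSumCtrlPath_one hr hq le_rfl).of_iterOpt cd_self hz⟩
  · have hyGB : y ∈ G ∪ B := hcov.symm.subset hy₁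
    exact ⟨0, ENNReal.zero_ne_top, 0, hyGB.resolve_right hy⟩

end TimeExtension

theorem stmt16_general {X : Type*} [MetricSpace X] (f : X → Option X) (a b : ℤ)
    (G B : Set ↥(DF f a b)) (hGB : Disjoint G B)
    (hcov : G ∪ B = {p : ↥(DF f a b) | (p : ℤ × X).1 = b})
    (hhit : ∃ (p q : ↥(DF f a b)) (n : ℕ), 0 < n ∧
      iterOpt (FF f a b) n p = some q ∧ q ∈ G) :
    Set.univ \ B = (⋃ ε ∈ {ε : ℝ≥0∞ | ε ≠ ⊤}, sumBasin (FF f a b) (cd f a b) ε G) ∧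
    Set.univ \ B = (⋃ ε ∈ {ε : ℝ≥0∞ | ε ≠ ⊤}, basin (FF f a b) (cd f a b) ε G) := by
  obtain ⟨p, q, n, hn, hpq, hq⟩ := hhit
  obtain ⟨r, hr⟩ := exists_apply_eq_of_iterOpt_eq_some hn hpq
  have hB : ∀ p ∈ B, (p : ℤ × X).1 = b := fun p hp => (hcov.subset (Or.inr hp) : _)
  have hcover : Set.univ \ B ⊆ ⋃ ε ∈ {ε : ℝ≥0∞ | ε ≠ ⊤}, sumBasin (FF f a b) (cd f a b) ε G :=
    fun y hy => by simpa using exists_mem_sumBasin_FF hcov hr hq hy.2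
  have hmono : (⋃ ε ∈ {ε : ℝ≥0∞ | ε ≠ ⊤}, sumBasin (FF f a b) (cd f a b) ε G) ⊆
      ⋃ ε ∈ {ε : ℝ≥0∞ | ε ≠ ⊤}, basin (FF f a b) (cd f a b) ε G :=
    Set.iUnion₂_mono fun _ _ => sumBasin_subset_basin
  have hdisj : (⋃ ε ∈ {ε : ℝ≥0∞ | ε ≠ ⊤}, basin (FF f a b) (cd f a b) ε G) ⊆ Set.univ \ B :=
    Set.iUnion₂_subset fun _ hε y hy =>
      ⟨trivial, Set.disjoint_left.mp (disjoint_basin_FF hGB hB hε) hy⟩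
  exact ⟨hcover.antisymm (hmono.trans hdisj), (hcover.trans hmono).antisymm hdisj⟩

theorem stmt16 {X : Type*} [MetricSpace X] (f : X → Option X) (a b : ℤ) (hab : a < b)
    (G B : Set ↥(DF f a b)) (hGB : Disjoint G B)
    (hcov : G ∪ B = {p : ↥(DF f a b) | (p : ℤ × X).1 = b})
    (hhit : ∃ (p q : ↥(DF f a b)) (n : ℕ), 0 < n ∧
      iterOpt (FF f a b) n p = some q ∧ q ∈ G) :
    Set.univ \ B = (⋃ ε ∈ {ε : ℝ≥0∞ | ε ≠ ⊤}, sumBasin (FF f a b) (cd f a b) ε G) ∧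
    Set.univ \ B = (⋃ ε ∈ {ε : ℝ≥0∞ | ε ≠ ⊤}, basin (FF f a b) (cd f a b) ε G) :=
  stmt16_general f a b G B hGB hcov hhit
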